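/- arXiv:1312.1006 — 5 statements merged into one kernel-verified Lean document; each statement's English description precedes it below -/
import Mathlib

section
/- Let $f_t: L^0 \to \bar{L}^0_t$ be monotone, $L^0_t$-local, $L^0_t$-cash additive (i.e. $f_t(X+m)=f_t(X)+m$ for $X\in L^0$, $m\in L^0_t$), and satisfy $f_t(0)\ne\infty$ a.s. Then the extension $\widehat{f}_t(X)=\lim_{n\to\infty}f_t(X\vee(-n))$ satisfies $\widehat{f}_t(X+m)=\widehat{f}_t(X)+m$ a.s. for all $[-\infty,\infty)$-valued $X$ and all $[-\infty,\infty)$-valued $\mathcal{F}_t$-measurable $m$ (with the conventions $\infty-\infty=-\infty$ and $0\cdot\pm\infty=0$). -/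
/-!
On `{m = -∞}` the truncations of `X + m` are the constants `-n`, so by locality and cash additivity
`f̂ₜ(X + m) = liminf (fₜ(0) - n) = -∞` there, using `fₜ(0) < ∞`.
On `{|m| ≤ k}` shifting by `m` moves the truncation level by at most `k`: locally
`X ∨ (-(n + k)) + m ≤ (X + m) ∨ (-n)` and `(X + m) ∨ (-(n + k)) ≤ X ∨ (-n) + m`, so monotonicity
and cash additivity sandwich the sequence defining `f̂ₜ(X + m)` between index shifts of the one
defining `f̂ₜ(X) + m`, and an index shift does not change a liminf.
-/

open MeasureTheory Filter Set Topology

/-- The liminf (truncation) extension `f̂ₜ(X) = liminf_n fₜ(X ∨ (-n))`. -/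
noncomputable def hatF {Ω : Type*} (f : (Ω → ℝ) → Ω → EReal) (X : Ω → EReal) : Ω → EReal :=
  fun ω => Filter.liminf (fun n : ℕ => f (fun ω' => (max (X ω') (-(n : ℝ))).toReal) ω) Filter.atTop

namespace EReal

noncomputable def addCoeOrderIso (r : ℝ) : EReal ≃o EReal where
  toFun x := x + r
  invFun x := x - r
  left_inv _ := EReal.add_sub_cancel_right
  right_inv _ := EReal.sub_add_cancel
  map_rel_iff' := (EReal.addLECancellable_coe _).add_le_add_iff_right

lemma liminf_add_coe (u : ℕ → EReal) (r : ℝ) :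
    liminf (fun n => u n + r) atTop = liminf u atTop + r :=
  (addCoeOrderIso r).liminf_apply.symm

lemma liminf_add_neg_natCast_eq_bot {y : EReal} (hy : y ≠ ⊤) :
    liminf (fun n : ℕ => y + ((-(n : ℝ) : ℝ) : EReal)) atTop = ⊥ := by
  have hneg : Tendsto (fun n : ℕ => ((-(n : ℝ) : ℝ) : EReal)) atTop (𝓝 ⊥) :=
    tendsto_coe_nhds_bot_iff.2 (tendsto_neg_atTop_atBot.comp tendsto_natCast_atTop_atTop)
  have hadd := (continuousAt_add (p := (y, ⊥)) (Or.inl hy) (Or.inr bot_ne_top)).tendsto.comp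
    (tendsto_const_nhds.prodMk_nhds hneg)
  simpa [Function.comp_def] using hadd.liminf_eq

lemma liminf_eq_liminf_add_coe_of_shift {u v : ℕ → EReal} {r : ℝ} (k : ℕ)
    (hlow : ∀ n, u (n + k) + r ≤ v n) (hup : ∀ n, v (n + k) ≤ u n + r) :
    liminf v atTop = liminf u atTop + r := by
  rw [← liminf_add_coe]
  apply le_antisymm
  · rw [← liminf_nat_add v k]
    exact liminf_le_liminf (Eventually.of_forall hup)
  · rw [← liminf_nat_add (fun n => u n + r) k]
    exact liminf_le_liminf (Eventually.of_forall hlow)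

lemma toReal_max_add_coe {x : EReal} (hx : x ≠ ⊤) (r a : ℝ) :
    (max (x + r) (a : EReal)).toReal = (max x ((a - r : ℝ) : EReal)).toReal + r := by
  induction x using EReal.rec with
  | bot =>
    rw [bot_add, max_eq_right bot_le, max_eq_right bot_le, toReal_coe, toReal_coe,
      _root_.sub_add_cancel]
  | coe s =>
    rw [← coe_add, ← coe_strictMono.monotone.map_max, ← coe_strictMono.monotone.map_max,
      toReal_coe, toReal_coe, ← max_add_add_right, _root_.sub_add_cancel]
  | top => exact absurd rfl hx

lemma toReal_max_coe_mono {x : EReal} (hx : x ≠ ⊤) :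
    Monotone fun a : ℝ => (max x (a : EReal)).toReal :=
  fun _ _ h => toReal_le_toReal (max_le_max le_rfl (EReal.coe_le_coe h))
    (ne_bot_of_le_ne_bot (coe_ne_bot _) (le_max_right _ _)) (max_lt hx.lt_top (coe_lt_top _)).ne

end EReal

section Truncation

variable {Ω : Type*}

noncomputable def truncBelow (X : Ω → EReal) (n : ℕ) : Ω → ℝ :=
  fun ω => (max (X ω) ((-(n : ℝ) : ℝ) : EReal)).toReal

lemma hatF_apply (f : (Ω → ℝ) → Ω → EReal) (X : Ω → EReal) (ω : Ω) :
    hatF f X ω = liminf (fun n => f (truncBelow X n) ω) atTop := rfl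

lemma truncBelow_add_le {X : Ω → EReal} {c : Ω → ℝ} {k : ℕ} {ω : Ω} (hX : X ω ≠ ⊤)
    (hc : |c ω| ≤ k) (n : ℕ) :
    truncBelow X (n + k) ω + c ω ≤ truncBelow (fun ω' => X ω' + c ω') n ω := by
  rw [truncBelow, truncBelow, EReal.toReal_max_add_coe hX]
  gcongr
  refine EReal.toReal_max_coe_mono hX ?_
  push_cast
  linarith [(abs_le.1 hc).2]

lemma truncBelow_add_ge {X : Ω → EReal} {c : Ω → ℝ} {k : ℕ} {ω : Ω} (hX : X ω ≠ ⊤)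
    (hc : |c ω| ≤ k) (n : ℕ) :
    truncBelow (fun ω' => X ω' + c ω') (n + k) ω ≤ truncBelow X n ω + c ω := by
  rw [truncBelow, truncBelow, EReal.toReal_max_add_coe hX]
  gcongr
  refine EReal.toReal_max_coe_mono hX ?_
  push_cast
  linarith [(abs_le.1 hc).1]

end Truncation

section RiskMap

variable {Ω : Type*} [MeasurableSpace Ω] {P : Measure Ω} {f : (Ω → ℝ) → Ω → EReal}

def IsAEMonotone (P : Measure Ω) (f : (Ω → ℝ) → Ω → EReal) : Prop :=
  ∀ X Y : Ω → ℝ, (∀ᵐ ω ∂P, X ω ≤ Y ω) → ∀ᵐ ω ∂P, f X ω ≤ f Y ω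

def IsLocal (P : Measure Ω) (f : (Ω → ℝ) → Ω → EReal) : Prop :=
  ∀ A : Set Ω, MeasurableSet A → ∀ X : Ω → ℝ,
    ∀ᵐ ω ∂P, A.indicator (f X) ω = A.indicator (f (A.indicator X)) ω

def IsCashAdditive (P : Measure Ω) (f : (Ω → ℝ) → Ω → EReal) : Prop :=
  ∀ X : Ω → ℝ, ∀ c : Ω → ℝ, Measurable c →
    ∀ᵐ ω ∂P, f (fun ω' => X ω' + c ω') ω = f X ω + (c ω : EReal)

lemma IsLocal.ae_eq_of_eqOn (hf : IsLocal P f) {A : Set Ω} (hA : MeasurableSet A)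
    {X Y : Ω → ℝ} (h : EqOn X Y A) : ∀ᵐ ω ∂P, ω ∈ A → f X ω = f Y ω := by
  filter_upwards [hf A hA X, hf A hA Y] with ω hXω hYω hω
  rw [indicator_of_mem hω, indicator_of_mem hω] at hXω hYω
  rw [hXω, hYω, indicator_congr h]

lemma IsLocal.ae_le_of_le_on (hf : IsLocal P f) (hmono : IsAEMonotone P f) {A : Set Ω}
    (hA : MeasurableSet A) {X Y : Ω → ℝ} (h : ∀ ω ∈ A, X ω ≤ Y ω) :
    ∀ᵐ ω ∂P, ω ∈ A → f X ω ≤ f Y ω := by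
  have hle : ∀ ω, A.indicator X ω ≤ A.indicator Y ω := fun ω => by
    by_cases hω : ω ∈ A
    · simpa [indicator_of_mem hω] using h ω hω
    · simp [indicator_of_notMem hω]
  filter_upwards [hf A hA X, hf A hA Y, hmono _ _ (ae_of_all _ hle)] with ω hXω hYω hω' hω
  rw [indicator_of_mem hω, indicator_of_mem hω] at hXω hYω
  rw [hXω, hYω]
  exact hω'

lemma hatF_ae_eq_of_eqOn (hf : IsLocal P f) {A : Set Ω} (hA : MeasurableSet A)
    {X Y : Ω → EReal} (h : EqOn X Y A) : ∀ᵐ ω ∂P, ω ∈ A → hatF f X ω = hatF f Y ω := by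
  have htrunc (n : ℕ) : EqOn (truncBelow X n) (truncBelow Y n) A := fun ω hω => by
    simp only [truncBelow, h hω]
  filter_upwards [ae_all_iff.2 fun n => hf.ae_eq_of_eqOn hA (htrunc n)] with ω hω' hω
  simp only [hatF_apply, hω' _ hω]

lemma hatF_ae_eq_bot (hf : IsLocal P f) (hcash : IsCashAdditive P f)
    (hzero : ∀ᵐ ω ∂P, f (fun _ => 0) ω ≠ ⊤) {A : Set Ω} (hA : MeasurableSet A)
    {Y : Ω → EReal} (hY : ∀ ω ∈ A, Y ω = ⊥) : ∀ᵐ ω ∂P, ω ∈ A → hatF f Y ω = ⊥ := by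
  have htrunc (n : ℕ) : EqOn (truncBelow Y n) (fun _ => 0 + -(n : ℝ)) A := fun ω hω => by
    simp only [truncBelow, hY ω hω, max_eq_right bot_le, EReal.toReal_coe, zero_add]
  have hconst (n : ℕ) := hcash (fun _ => 0) (fun _ => -(n : ℝ)) measurable_const
  filter_upwards [ae_all_iff.2 fun n => hf.ae_eq_of_eqOn hA (htrunc n), ae_all_iff.2 hconst, hzero]
    with ω hloc hcashω hzeroω hω
  rw [hatF_apply]
  simp only [hloc _ hω, hcashω]
  exact EReal.liminf_add_neg_natCast_eq_bot hzeroω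

lemma hatF_add_ae_eq_of_abs_le (hmono : IsAEMonotone P f) (hf : IsLocal P f)
    (hcash : IsCashAdditive P f) {X : Ω → EReal} (hX : ∀ ω, X ω ≠ ⊤) {c : Ω → ℝ}
    (hc : Measurable c) (k : ℕ) :
    ∀ᵐ ω ∂P, |c ω| ≤ k → hatF f (fun ω' => X ω' + c ω') ω = hatF f X ω + c ω := by
  have hA : MeasurableSet {ω | |c ω| ≤ k} := measurableSet_le hc.abs measurable_const
  have hlow (n : ℕ) := hf.ae_le_of_le_on hmono hA
    (fun ω hω => truncBelow_add_le (X := X) (hX ω) hω n)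
  have hup (n : ℕ) := hf.ae_le_of_le_on hmono hA
    (fun ω hω => truncBelow_add_ge (X := X) (hX ω) hω n)
  have hshift (n : ℕ) := hcash (truncBelow X n) c hc
  filter_upwards [ae_all_iff.2 hlow, ae_all_iff.2 hup, ae_all_iff.2 hshift]
    with ω hlowω hupω hshiftω hω
  refine EReal.liminf_eq_liminf_add_coe_of_shift k (fun n => ?_) (fun n => ?_)
  · exact (hshiftω (n + k)).symm.trans_le (hlowω n hω)
  · exact (hupω n hω).trans_eq (hshiftω n)

lemma hatF_add_ae_eq (hmono : IsAEMonotone P f) (hf : IsLocal P f)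
    (hcash : IsCashAdditive P f) {X : Ω → EReal} (hX : ∀ ω, X ω ≠ ⊤) {c : Ω → ℝ}
    (hc : Measurable c) :
    ∀ᵐ ω ∂P, hatF f (fun ω' => X ω' + c ω') ω = hatF f X ω + c ω := by
  filter_upwards [ae_all_iff.2 (hatF_add_ae_eq_of_abs_le hmono hf hcash hX hc)] with ω h
  exact h ⌈|c ω|⌉₊ (Nat.le_ceil _)

end RiskMap

/-- In `EReal`, `⊤ + ⊥ = ⊥` encodes the convention `∞ - ∞ = -∞`. -/
theorem hatF_cash_additive_general {Ω : Type*} (mt : MeasurableSpace Ω)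
    (P : Measure Ω)
    (f : (Ω → ℝ) → Ω → EReal)
    (hmono : ∀ X Y : Ω → ℝ, (∀ᵐ ω ∂P, X ω ≤ Y ω) → ∀ᵐ ω ∂P, f X ω ≤ f Y ω)
    (hlocal : ∀ A : Set Ω, MeasurableSet[mt] A → ∀ X : Ω → ℝ,
      ∀ᵐ ω ∂P, A.indicator (f X) ω = A.indicator (f (A.indicator X)) ω)
    (hcash : ∀ X : Ω → ℝ, ∀ c : Ω → ℝ, Measurable[mt] c →
      ∀ᵐ ω ∂P, f (fun ω' => X ω' + c ω') ω = f X ω + (c ω : EReal))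
    (hzero : ∀ᵐ ω ∂P, f (fun _ => 0) ω ≠ ⊤)
    (X : Ω → EReal) (hX : ∀ ω, X ω ≠ ⊤)
    (c : Ω → EReal) (hc : Measurable[mt] c) (hctop : ∀ ω, c ω ≠ ⊤) :
    ∀ᵐ ω ∂P, hatF f (fun ω' => X ω' + c ω') ω = hatF f X ω + c ω := by
  set cR : Ω → ℝ := fun ω => (c ω).toReal
  have hbot : MeasurableSet {ω | c ω = ⊥} := hc (measurableSet_singleton ⊥)
  filter_upwards [hatF_ae_eq_bot hlocal hcash hzero hbot (Y := fun ω => X ω + c ω)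
      fun ω hω => by simp [show c ω = ⊥ from hω],
    hatF_ae_eq_of_eqOn hlocal hbot.compl (X := fun ω => X ω + c ω) (Y := fun ω => X ω + cR ω)
      fun ω hω => by simp [cR, EReal.coe_toReal (hctop ω) hω],
    hatF_add_ae_eq hmono hlocal hcash hX hc.ereal_toReal] with ω h_bot h_real h_add
  by_cases hω : c ω = ⊥
  · rw [h_bot hω, hω, EReal.add_bot]
  · rw [h_real hω, h_add, EReal.coe_toReal (hctop ω) hω]

/-- if `fₜ` is monotone, `L⁰ₜ`-local, `L⁰ₜ`-cash additive and `fₜ(0) ≠ ∞` a.s.,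
then the extension `f̂ₜ` satisfies `f̂ₜ(X + m) = f̂ₜ(X) + m` a.s. for all `[-∞,∞)`-valued `X`
and all `[-∞,∞)`-valued `ℱₜ`-measurable `m`. (In `EReal`, `⊤ + ⊥ = ⊥`, matching the
convention `∞ - ∞ = -∞`; `Set.indicator` realizes `0 · (±∞) = 0`.) -/
theorem hatF_cash_additive {Ω : Type*} {mm : MeasurableSpace Ω} (mt : MeasurableSpace Ω)
    (hmt : mt ≤ mm) (P : Measure Ω) [IsProbabilityMeasure P]
    (f : (Ω → ℝ) → Ω → EReal)
    (hmeas : ∀ X : Ω → ℝ, Measurable[mt] (f X))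
    (hmono : ∀ X Y : Ω → ℝ, (∀ᵐ ω ∂P, X ω ≤ Y ω) → ∀ᵐ ω ∂P, f X ω ≤ f Y ω)
    (hlocal : ∀ A : Set Ω, MeasurableSet[mt] A → ∀ X : Ω → ℝ,
      ∀ᵐ ω ∂P, A.indicator (f X) ω = A.indicator (f (A.indicator X)) ω)
    (hcash : ∀ X : Ω → ℝ, ∀ c : Ω → ℝ, Measurable[mt] c →
      ∀ᵐ ω ∂P, f (fun ω' => X ω' + c ω') ω = f X ω + (c ω : EReal))
    (hzero : ∀ᵐ ω ∂P, f (fun _ => 0) ω ≠ ⊤)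
    (X : Ω → EReal) (hX : ∀ ω, X ω ≠ ⊤)
    (c : Ω → EReal) (hc : Measurable[mt] c) (hctop : ∀ ω, c ω ≠ ⊤) :
    ∀ᵐ ω ∂P, hatF f (fun ω' => X ω' + c ω') ω = hatF f X ω + c ω :=
  hatF_cash_additive_general mt P f hmono hlocal hcash hzero X hX c hc hctop
end

section
/- With notation as in the definition of DLGI, suppose $\{\mu_t\}$ is monotone and $L^\infty_t$-local and satisfies $\liminf_{T\to\infty}\frac{1}{T}\mu_t(\ln(V_T/V_t)) = \liminf_{T\to\infty}\frac{1}{T}\mu_t(\ln V_T)$ for all $V\in\mathbb{V}$. Then $\varphi_t(V)=\liminf_{T\to\infty}\frac{1}{T}\mu_t(\ln V_T)$ is $L^\infty_t$-quasi-concave on $\mathbb{V}$: for $\lambda\in L^\infty_t$ with $0\le\lambda\le 1$, $\varphi_t(\lambda\cdot_t V + (1-\lambda)\cdot_t V') \ge \varphi_t(V)\wedge\varphi_t(V')$. -/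
open MeasureTheory Filter Set

/-- Extended-real logarithm of a (nonnegative) real, with `ln 0 = -∞`. -/
noncomputable def elog (x : ℝ) : EReal := if x ≤ 0 then ⊥ else ((Real.log x : ℝ) : EReal)

/-- Membership in the cone `𝕍` of nonnegative adapted processes absorbed at `0`. -/
def MemV {Ω : Type*} [m : MeasurableSpace Ω] (ℱ : MeasureTheory.Filtration ℕ m)
    (V : ℕ → Ω → ℝ) : Prop :=
  (∀ t, Measurable[ℱ t] (V t)) ∧ (∀ t ω, 0 ≤ V t ω) ∧
    (∀ s t : ℕ, s ≤ t → ∀ ω, V s ω = 0 → V t ω = 0)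

/-- `φₜ(V) = liminf_{T→∞} (1/T) μₜ(ln V_T)`. -/
noncomputable def DLGI0 {Ω : Type*} (μ : ℕ → (Ω → EReal) → Ω → EReal)
    (t : ℕ) (V : ℕ → Ω → ℝ) : Ω → EReal :=
  fun ω => Filter.liminf
    (fun T : ℕ => (((T : ℝ)⁻¹ : ℝ) : EReal) * μ t (fun ω' => elog (V T ω')) ω)
    Filter.atTop

/-- The convex combination `λ ·ₜ V + (1-λ) ·ₜ V'` of two processes, where `·ₜ`
multiplies only the entries with index `≥ t`. -/
def combV {Ω : Type*} (t : ℕ) (lam : Ω → ℝ) (V V' : ℕ → Ω → ℝ) : ℕ → Ω → ℝ :=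
  fun T ω => if t ≤ T then lam ω * V T ω + (1 - lam ω) * V' T ω else V T ω + V' T ω

/-! Since every process involved is nonnegative, `λ ·ₜ V + (1-λ) ·ₜ V'` dominates both
`λ ·ₜ V` and `(1-λ) ·ₜ V'`, so by monotonicity `φₜ` of the combination is at least
`φₜ(λ ·ₜ V)` and at least `φₜ((1-λ) ·ₜ V')`. On the `ℱ t`-event `{λ > 0}` locality lets
us cancel the factor `λ` in the log-returns `V_T / V_t`, so the hypothesis on log-returns
gives `φₜ(λ ·ₜ V) = φₜ(V)` there; likewise `φₜ((1-λ) ·ₜ V') = φₜ(V')` on `{λ < 1}`, and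
these two events cover `Ω`. -/

/-- The paper's product `c ·ₜ V`. -/
def scaleFrom {Ω : Type*} (t : ℕ) (c : Ω → ℝ) (V : ℕ → Ω → ℝ) : ℕ → Ω → ℝ :=
  fun T ω => if t ≤ T then c ω * V T ω else V T ω

noncomputable def logReturnRate {Ω : Type*} (μ : ℕ → (Ω → EReal) → Ω → EReal)
    (t : ℕ) (V : ℕ → Ω → ℝ) : Ω → EReal :=
  fun ω => Filter.liminf
    (fun T : ℕ => (((T : ℝ)⁻¹ : ℝ) : EReal) * μ t (fun ω' => elog (V T ω' / V t ω')) ω)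
    Filter.atTop

lemma elog_monotone : Monotone elog := by
  intro a b hab
  unfold elog
  by_cases ha : a ≤ 0
  · simp [ha]
  · have hb : ¬ b ≤ 0 := fun h => ha (hab.trans h)
    simp only [if_neg ha, if_neg hb, EReal.coe_le_coe_iff]
    exact Real.log_le_log (lt_of_not_ge ha) hab

lemma combV_comm {Ω : Type*} (t : ℕ) (lam : Ω → ℝ) (V V' : ℕ → Ω → ℝ) :
    combV t lam V V' = combV t (fun ω => 1 - lam ω) V' V := by
  funext T ω
  unfold combV
  split_ifs <;> ring

lemma scaleFrom_le_combV {Ω : Type*} (t : ℕ) (lam : Ω → ℝ) (hlam1 : ∀ ω, lam ω ≤ 1)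
    (V V' : ℕ → Ω → ℝ) (hV' : ∀ T ω, 0 ≤ V' T ω) (T : ℕ) (ω : Ω) :
    scaleFrom t lam V T ω ≤ combV t lam V V' T ω := by
  unfold scaleFrom combV
  split_ifs
  · exact le_add_of_nonneg_right (mul_nonneg (sub_nonneg.mpr (hlam1 ω)) (hV' T ω))
  · exact le_add_of_nonneg_right (hV' T ω)

namespace MemV

variable {Ω : Type*} [m : MeasurableSpace Ω] {ℱ : MeasureTheory.Filtration ℕ m}
  {V : ℕ → Ω → ℝ}

lemma nonneg (hV : MemV ℱ V) (T : ℕ) (ω : Ω) : 0 ≤ V T ω := hV.2.1 T ω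

lemma scaleFrom (hV : MemV ℱ V) {t : ℕ} {c : Ω → ℝ} (hc : Measurable[ℱ t] c)
    (hc0 : ∀ ω, 0 ≤ c ω) : MemV ℱ (scaleFrom t c V) := by
  refine ⟨fun s => ?_, fun s ω => ?_, fun s T hsT ω h0 => ?_⟩
  · unfold _root_.scaleFrom
    split_ifs with h
    · exact (hc.mono (ℱ.mono h) le_rfl).mul (hV.1 s)
    · exact hV.1 s
  · unfold _root_.scaleFrom
    split_ifs
    · exact mul_nonneg (hc0 ω) (hV.nonneg s ω)
    · exact hV.nonneg s ω
  · unfold _root_.scaleFrom at h0 ⊢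
    have hVT (hVs : V s ω = 0) : V T ω = 0 := hV.2.2 s T hsT ω hVs
    by_cases hs : t ≤ s
    · rw [if_pos hs] at h0
      rw [if_pos (hs.trans hsT)]
      rcases mul_eq_zero.mp h0 with hc' | hVs
      · rw [hc', zero_mul]
      · rw [hVT hVs, mul_zero]
    · rw [if_neg hs] at h0
      split_ifs
      · rw [hVT h0, mul_zero]
      · exact hVT h0

end MemV

section Measures

variable {Ω : Type*} [m : MeasurableSpace Ω] {P : Measure Ω}
  {ℱ : MeasureTheory.Filtration ℕ m} {μ : ℕ → (Ω → EReal) → Ω → EReal} {t : ℕ}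

lemma DLGI0_le_of_le
    (hmono : ∀ X Y : Ω → EReal, (∀ᵐ ω ∂P, X ω ≤ Y ω) → ∀ᵐ ω ∂P, μ t X ω ≤ μ t Y ω)
    {W₁ W₂ : ℕ → Ω → ℝ} (h : ∀ T ω, W₁ T ω ≤ W₂ T ω) :
    ∀ᵐ ω ∂P, DLGI0 μ t W₁ ω ≤ DLGI0 μ t W₂ ω := by
  have hμ : ∀ᵐ ω ∂P, ∀ T : ℕ,
      μ t (fun ω' => elog (W₁ T ω')) ω ≤ μ t (fun ω' => elog (W₂ T ω')) ω :=
    ae_all_iff.mpr fun T => hmono _ _ (.of_forall fun ω => elog_monotone (h T ω))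
  filter_upwards [hμ] with ω hω
  exact Filter.liminf_le_liminf (.of_forall fun T =>
    mul_le_mul_of_nonneg_left (hω T) (EReal.coe_nonneg.mpr (by positivity)))

lemma ae_eq_of_indicator_eq
    (hlocal : ∀ A : Set Ω, MeasurableSet[ℱ t] A → ∀ X : Ω → EReal,
      ∀ᵐ ω ∂P, A.indicator (μ t X) ω = A.indicator (μ t (A.indicator X)) ω)
    {A : Set Ω} (hA : MeasurableSet[ℱ t] A) {X Y : Ω → EReal}
    (hXY : A.indicator X = A.indicator Y) :
    ∀ᵐ ω ∂P, ω ∈ A → μ t X ω = μ t Y ω := by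
  filter_upwards [hlocal A hA X, hlocal A hA Y] with ω hX hY hω
  have h : A.indicator (μ t X) ω = A.indicator (μ t Y) ω := by rw [hX, hXY, ← hY]
  rwa [Set.indicator_of_mem hω, Set.indicator_of_mem hω] at h

lemma logReturnRate_scaleFrom
    (hlocal : ∀ A : Set Ω, MeasurableSet[ℱ t] A → ∀ X : Ω → EReal,
      ∀ᵐ ω ∂P, A.indicator (μ t X) ω = A.indicator (μ t (A.indicator X)) ω)
    (V : ℕ → Ω → ℝ) {c : Ω → ℝ} (hc : Measurable[ℱ t] c) :
    ∀ᵐ ω ∂P, 0 < c ω → logReturnRate μ t (scaleFrom t c V) ω = logReturnRate μ t V ω := by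
  have hA : MeasurableSet[ℱ t] {ω | 0 < c ω} := measurableSet_lt measurable_const hc
  have hreturn : ∀ T, t ≤ T → {ω | 0 < c ω}.indicator
      (fun ω => elog (scaleFrom t c V T ω / scaleFrom t c V t ω)) =
      {ω | 0 < c ω}.indicator (fun ω => elog (V T ω / V t ω)) := by
    intro T hT
    refine Set.indicator_congr fun ω hω => ?_
    simp only [scaleFrom, if_pos hT, if_pos le_rfl]
    rw [mul_div_mul_left _ _ (ne_of_gt (show 0 < c ω from hω))]
  have hμ : ∀ᵐ ω ∂P, ∀ T, t ≤ T → 0 < c ω →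
      μ t (fun ω => elog (scaleFrom t c V T ω / scaleFrom t c V t ω)) ω =
      μ t (fun ω => elog (V T ω / V t ω)) ω := by
    refine ae_all_iff.mpr fun T => ?_
    by_cases hT : t ≤ T
    · filter_upwards [ae_eq_of_indicator_eq hlocal hA (hreturn T hT)] with ω hω _
      exact hω
    · exact .of_forall fun _ hT' => absurd hT' hT
  filter_upwards [hμ] with ω hω hc0
  refine Filter.liminf_congr ?_
  filter_upwards [Filter.eventually_ge_atTop t] with T hT
  rw [hω T hT hc0]

lemma DLGI0_scaleFrom
    (hlocal : ∀ A : Set Ω, MeasurableSet[ℱ t] A → ∀ X : Ω → EReal,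
      ∀ᵐ ω ∂P, A.indicator (μ t X) ω = A.indicator (μ t (A.indicator X)) ω)
    (henough : ∀ V : ℕ → Ω → ℝ, MemV ℱ V →
      ∀ᵐ ω ∂P, logReturnRate μ t V ω = DLGI0 μ t V ω)
    {V : ℕ → Ω → ℝ} (hV : MemV ℱ V) {c : Ω → ℝ} (hc : Measurable[ℱ t] c)
    (hc0 : ∀ ω, 0 ≤ c ω) :
    ∀ᵐ ω ∂P, 0 < c ω → DLGI0 μ t (scaleFrom t c V) ω = DLGI0 μ t V ω := by
  filter_upwards [logReturnRate_scaleFrom hlocal V hc, henough _ (hV.scaleFrom hc hc0),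
    henough V hV] with ω hreturn hcVrate hVrate hpos
  rw [← hcVrate, hreturn hpos, hVrate]

lemma DLGI0_le_DLGI0_combV
    (hmono : ∀ X Y : Ω → EReal, (∀ᵐ ω ∂P, X ω ≤ Y ω) → ∀ᵐ ω ∂P, μ t X ω ≤ μ t Y ω)
    (hlocal : ∀ A : Set Ω, MeasurableSet[ℱ t] A → ∀ X : Ω → EReal,
      ∀ᵐ ω ∂P, A.indicator (μ t X) ω = A.indicator (μ t (A.indicator X)) ω)
    (henough : ∀ V : ℕ → Ω → ℝ, MemV ℱ V →
      ∀ᵐ ω ∂P, logReturnRate μ t V ω = DLGI0 μ t V ω)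
    {V V' : ℕ → Ω → ℝ} (hV : MemV ℱ V) (hV' : ∀ T ω, 0 ≤ V' T ω)
    {lam : Ω → ℝ} (hlam : Measurable[ℱ t] lam) (hlam0 : ∀ ω, 0 ≤ lam ω)
    (hlam1 : ∀ ω, lam ω ≤ 1) :
    ∀ᵐ ω ∂P, 0 < lam ω → DLGI0 μ t V ω ≤ DLGI0 μ t (combV t lam V V') ω := by
  filter_upwards [DLGI0_scaleFrom hlocal henough hV hlam hlam0,
    DLGI0_le_of_le hmono (scaleFrom_le_combV t lam hlam1 V V' hV')]
    with ω hscale hle hpos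
  exact (hscale hpos).symm.le.trans hle

end Measures

theorem dlgi_quasiconcave_general {Ω : Type*} [m : MeasurableSpace Ω] (P : Measure Ω)
    (ℱ : MeasureTheory.Filtration ℕ m)
    (μ : ℕ → (Ω → EReal) → Ω → EReal)
    (hmono : ∀ t, ∀ X Y : Ω → EReal, (∀ᵐ ω ∂P, X ω ≤ Y ω) → ∀ᵐ ω ∂P, μ t X ω ≤ μ t Y ω)
    (hlocal : ∀ t, ∀ A : Set Ω, MeasurableSet[ℱ t] A → ∀ X : Ω → EReal,
      ∀ᵐ ω ∂P, A.indicator (μ t X) ω = A.indicator (μ t (A.indicator X)) ω)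
    (henough : ∀ t, ∀ V : ℕ → Ω → ℝ, MemV ℱ V →
      ∀ᵐ ω ∂P,
        Filter.liminf
          (fun T : ℕ => (((T : ℝ)⁻¹ : ℝ) : EReal) * μ t (fun ω' => elog (V T ω' / V t ω')) ω)
          Filter.atTop = DLGI0 μ t V ω)
    (t : ℕ) (V V' : ℕ → Ω → ℝ) (hV : MemV ℱ V) (hV' : MemV ℱ V')
    (lam : Ω → ℝ) (hlam : Measurable[ℱ t] lam) (hlam0 : ∀ ω, 0 ≤ lam ω) (hlam1 : ∀ ω, lam ω ≤ 1) :
    ∀ᵐ ω ∂P, min (DLGI0 μ t V ω) (DLGI0 μ t V' ω) ≤ DLGI0 μ t (combV t lam V V') ω := by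
  have hlam' : Measurable[ℱ t] fun ω => 1 - lam ω := measurable_const.sub hlam
  filter_upwards [DLGI0_le_DLGI0_combV (hmono t) (hlocal t) (henough t) hV hV'.nonneg hlam hlam0 hlam1,
    DLGI0_le_DLGI0_combV (hmono t) (hlocal t) (henough t) hV' hV.nonneg hlam'
      (fun ω => sub_nonneg.mpr (hlam1 ω)) (fun ω => sub_le_self _ (hlam0 ω))]
    with ω hleV hleV'
  rcases (hlam0 ω).lt_or_eq with hpos | hzero
  · exact min_le_of_left_le (hleV hpos)
  · rw [combV_comm]
    exact min_le_of_right_le (hleV' (by linarith))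

/-- if the monotone local family `{μₜ}` satisfies
`liminf (1/T) μₜ(ln(V_T/V_t)) = liminf (1/T) μₜ(ln V_T)` on `𝕍`, then
`φₜ(V) = liminf (1/T) μₜ(ln V_T)` is `L^∞ₜ`-quasi-concave on `𝕍`. -/
theorem dlgi_quasiconcave {Ω : Type*} [m : MeasurableSpace Ω] (P : Measure Ω)
    [IsProbabilityMeasure P] (ℱ : MeasureTheory.Filtration ℕ m)
    (μ : ℕ → (Ω → EReal) → Ω → EReal)
    (hmeas : ∀ t X, Measurable[ℱ t] (μ t X))
    (hmono : ∀ t, ∀ X Y : Ω → EReal, (∀ᵐ ω ∂P, X ω ≤ Y ω) → ∀ᵐ ω ∂P, μ t X ω ≤ μ t Y ω)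
    (hlocal : ∀ t, ∀ A : Set Ω, MeasurableSet[ℱ t] A → ∀ X : Ω → EReal,
      ∀ᵐ ω ∂P, A.indicator (μ t X) ω = A.indicator (μ t (A.indicator X)) ω)
    (henough : ∀ t, ∀ V : ℕ → Ω → ℝ, MemV ℱ V →
      ∀ᵐ ω ∂P,
        Filter.liminf
          (fun T : ℕ => (((T : ℝ)⁻¹ : ℝ) : EReal) * μ t (fun ω' => elog (V T ω' / V t ω')) ω)
          Filter.atTop = DLGI0 μ t V ω)
    (t : ℕ) (V V' : ℕ → Ω → ℝ) (hV : MemV ℱ V) (hV' : MemV ℱ V')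
    (lam : Ω → ℝ) (hlam : Measurable[ℱ t] lam) (hlam0 : ∀ ω, 0 ≤ lam ω) (hlam1 : ∀ ω, lam ω ≤ 1) :
    ∀ᵐ ω ∂P, min (DLGI0 μ t V ω) (DLGI0 μ t V' ω) ≤ DLGI0 μ t (combV t lam V V') ω :=
  dlgi_quasiconcave_general (m := m) P ℱ μ hmono hlocal henough t V V' hV hV' lam hlam hlam0 hlam1
end

section
/- Let $\{\rho_t\}$ be a dynamic risk measure and define $\widetilde{\rho}_t(X)=\rho_t(X^+)$. Then for every $V\in\mathbb{V}$ with $P[V_t>0]=1$: $\liminf_{T\to\infty}\frac{-\rho_t([\ln(V_T/V_t)]^+)}{T} = \liminf_{T\to\infty}\frac{-\rho_t([\ln V_T]^+)}{T}$ a.s. -/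
/-!
Since `V_t > 0` a.s., the random variables `[ln (V_T / V_t)]⁺` and `[ln V_T]⁺` differ by at
most `|ln V_t|` (the positive part is 1-Lipschitz), which is `ℱ_t`-measurable and finite.
Monotonicity and cash additivity transfer this bound to `-ρ_t`, and after dividing by `T` the
error `|ln V_t| / T` disappears in the liminf.
-/

open MeasureTheory Filter Set

theorem max_elog_le_max_elog_mul_add {v : ℝ} (hv : 0 < v) (x : ℝ) :
    max (elog x) 0 ≤ max (elog (x * v)) 0 + ((|Real.log v| : ℝ) : EReal) := by
  have hlog_nonneg : (0 : EReal) ≤ ((|Real.log v| : ℝ) : EReal) :=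
    EReal.coe_nonneg.2 (abs_nonneg _)
  rcases le_or_gt x 0 with hx | hx
  · rw [elog, if_pos hx, max_eq_right bot_le]
    exact add_nonneg (le_max_right _ _) hlog_nonneg
  · have hxv : 0 < x * v := mul_pos hx hv
    rw [elog, elog, if_neg hx.not_ge, if_neg hxv.not_ge, Real.log_mul hx.ne' hv.ne',
      ← EReal.coe_zero, ← EReal.coe_strictMono.monotone.map_max,
      ← EReal.coe_strictMono.monotone.map_max, ← EReal.coe_add, EReal.coe_le_coe_iff]
    have h := abs_max_sub_max_le_abs (Real.log x) (Real.log x + Real.log v) 0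
    rw [sub_add_cancel_left, abs_neg] at h
    linarith [le_abs_self (max (Real.log x) 0 - max (Real.log x + Real.log v) 0)]

theorem max_elog_div_le_max_elog_add {v : ℝ} (hv : 0 < v) (x : ℝ) :
    max (elog (x / v)) 0 ≤ max (elog x) 0 + ((|Real.log v| : ℝ) : EReal) := by
  simpa only [div_mul_cancel₀ x hv.ne'] using max_elog_le_max_elog_mul_add hv (x / v)

theorem max_elog_le_max_elog_div_add {v : ℝ} (hv : 0 < v) (x : ℝ) :
    max (elog x) 0 ≤ max (elog (x / v)) 0 + ((|Real.log v| : ℝ) : EReal) := by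
  simpa only [div_eq_mul_inv, Real.log_inv, abs_neg] using
    max_elog_le_max_elog_mul_add (inv_pos.2 hv) x

open Topology in
theorem EReal.liminf_mul_le_liminf_mul_of_le_add {α : Type*} {l : Filter α} [l.NeBot]
    {r : α → ℝ} (hr₀ : ∀ a, 0 ≤ r a) (hr : Tendsto r l (𝓝 0)) {u v : α → EReal} (c : ℝ)
    (huv : ∀ a, u a ≤ v a + c) :
    liminf (fun a => (r a : EReal) * u a) l ≤ liminf (fun a => (r a : EReal) * v a) l := by
  set err : α → EReal := fun a => (r a : EReal) * c
  have herr : limsup err l = 0 := by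
    simpa [err] using (EReal.tendsto_coe.2 (hr.mul_const c)).limsup_eq
  have hle : ∀ a, (r a : EReal) * u a ≤ err a + (r a : EReal) * v a := fun a => by
    have hra : (0 : EReal) ≤ r a := EReal.coe_nonneg.2 (hr₀ a)
    calc (r a : EReal) * u a ≤ (r a : EReal) * (v a + c) := mul_le_mul_of_nonneg_left (huv a) hra
      _ = err a + (r a : EReal) * v a := by
        rw [EReal.left_distrib_of_nonneg_of_ne_top hra (EReal.coe_ne_top _), add_comm]
  calc liminf (fun a => (r a : EReal) * u a) l
      ≤ liminf (err + fun a => (r a : EReal) * v a) l :=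
        liminf_le_liminf (Eventually.of_forall hle)
    _ ≤ limsup err l + liminf (fun a => (r a : EReal) * v a) l :=
        EReal.liminf_add_le (.inl (by simp [herr])) (.inl (by simp [herr]))
    _ = liminf (fun a => (r a : EReal) * v a) l := by rw [herr, zero_add]

theorem ae_neg_le_neg_add_of_ae_le_add {Ω : Type*} [MeasurableSpace Ω] {P : Measure Ω}
    {mt : MeasurableSpace Ω} {ρ : (Ω → EReal) → Ω → EReal}
    (hmono : ∀ X Y : Ω → EReal, (∀ᵐ ω ∂P, X ω ≤ Y ω) → ∀ᵐ ω ∂P, -(ρ X ω) ≤ -(ρ Y ω))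
    (hcash : ∀ X : Ω → EReal, ∀ c : Ω → EReal, Measurable[mt] c → (∀ ω, c ω ≠ ⊤) →
      ∀ᵐ ω ∂P, -(ρ (fun ω' => X ω' + c ω') ω) = -(ρ X ω) + c ω)
    {X Y c : Ω → EReal} (hc : Measurable[mt] c) (hc_top : ∀ ω, c ω ≠ ⊤)
    (hXY : ∀ᵐ ω ∂P, X ω ≤ Y ω + c ω) :
    ∀ᵐ ω ∂P, -(ρ X ω) ≤ -(ρ Y ω) + c ω := by
  filter_upwards [hmono X _ hXY, hcash Y c hc hc_top] with ω hle heq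
  exact hle.trans_eq heq

theorem risk_seeking_enough_general {Ω : Type*} [m : MeasurableSpace Ω] (P : Measure Ω)
    (ℱ : MeasureTheory.Filtration ℕ m)
    (ρ : ℕ → (Ω → EReal) → Ω → EReal)
    (hmono : ∀ t, ∀ X Y : Ω → EReal, (∀ᵐ ω ∂P, X ω ≤ Y ω) →
      ∀ᵐ ω ∂P, -(ρ t X ω) ≤ -(ρ t Y ω))
    (hcash : ∀ t, ∀ X : Ω → EReal, ∀ c : Ω → EReal, Measurable[ℱ t] c → (∀ ω, c ω ≠ ⊤) →
      ∀ᵐ ω ∂P, -(ρ t (fun ω' => X ω' + c ω') ω) = -(ρ t X ω) + c ω)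
    (t : ℕ) (V : ℕ → Ω → ℝ) (hV : MemV ℱ V) (hVt : ∀ᵐ ω ∂P, 0 < V t ω) :
    ∀ᵐ ω ∂P,
      Filter.liminf
        (fun T : ℕ => (((T : ℝ)⁻¹ : ℝ) : EReal)
          * (-(ρ t (fun ω' => max (elog (V T ω' / V t ω')) 0) ω)))
        Filter.atTop
      = Filter.liminf
        (fun T : ℕ => (((T : ℝ)⁻¹ : ℝ) : EReal)
          * (-(ρ t (fun ω' => max (elog (V T ω')) 0) ω)))
        Filter.atTop := by
  set c : Ω → EReal := fun ω => ((|Real.log (V t ω)| : ℝ) : EReal)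
  have hc : Measurable[ℱ t] c :=
    (measurable_coe_real_ereal.comp Real.measurable_log.abs).comp (hV.1 t)
  have hc_top : ∀ ω, c ω ≠ ⊤ := fun ω => EReal.coe_ne_top _
  have hcompare : ∀ T : ℕ, ∀ᵐ ω ∂P,
      -(ρ t (fun ω' => max (elog (V T ω' / V t ω')) 0) ω)
          ≤ -(ρ t (fun ω' => max (elog (V T ω')) 0) ω) + c ω ∧
      -(ρ t (fun ω' => max (elog (V T ω')) 0) ω)
          ≤ -(ρ t (fun ω' => max (elog (V T ω' / V t ω')) 0) ω) + c ω := fun T =>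
    (ae_neg_le_neg_add_of_ae_le_add (hmono t) (hcash t) hc hc_top
      (hVt.mono fun ω hv => max_elog_div_le_max_elog_add hv _)).and
    (ae_neg_le_neg_add_of_ae_le_add (hmono t) (hcash t) hc hc_top
      (hVt.mono fun ω hv => max_elog_le_max_elog_div_add hv _))
  have hinv : Tendsto (fun T : ℕ => (T : ℝ)⁻¹) atTop (nhds 0) := tendsto_inv_atTop_nhds_zero_nat
  filter_upwards [ae_all_iff.2 hcompare] with ω hω
  exact le_antisymm
    (EReal.liminf_mul_le_liminf_mul_of_le_add (fun _ => by positivity) hinv _ fun T => (hω T).1)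
    (EReal.liminf_mul_le_liminf_mul_of_le_add (fun _ => by positivity) hinv _ fun T => (hω T).2)

/-- for a dynamic risk measure `{ρₜ}` and `ρ̃ₜ(X) = ρₜ(X⁺)`, for every
`V ∈ 𝕍` with `P[V_t > 0] = 1`:
`liminf_T (-ρₜ([ln(V_T/V_t)]⁺))/T = liminf_T (-ρₜ([ln V_T]⁺))/T` a.s. -/
theorem risk_seeking_enough {Ω : Type*} [m : MeasurableSpace Ω] (P : Measure Ω)
    [IsProbabilityMeasure P] (ℱ : MeasureTheory.Filtration ℕ m)
    (ρ : ℕ → (Ω → EReal) → Ω → EReal)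
    (hmeas : ∀ t X, Measurable[ℱ t] (ρ t X))
    (hmono : ∀ t, ∀ X Y : Ω → EReal, (∀ᵐ ω ∂P, X ω ≤ Y ω) →
      ∀ᵐ ω ∂P, -(ρ t X ω) ≤ -(ρ t Y ω))
    (hnorm : ∀ t, ∀ᵐ ω ∂P, ρ t (fun _ => (0 : EReal)) ω = 0)
    (hcash : ∀ t, ∀ X : Ω → EReal, ∀ c : Ω → EReal, Measurable[ℱ t] c → (∀ ω, c ω ≠ ⊤) →
      ∀ᵐ ω ∂P, -(ρ t (fun ω' => X ω' + c ω') ω) = -(ρ t X ω) + c ω)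
    (hlocal : ∀ t, ∀ A : Set Ω, MeasurableSet[ℱ t] A → ∀ X : Ω → EReal,
      ∀ᵐ ω ∂P, A.indicator (fun ω' => -(ρ t X ω')) ω
        = A.indicator (fun ω' => -(ρ t (A.indicator X) ω')) ω)
    (t : ℕ) (V : ℕ → Ω → ℝ) (hV : MemV ℱ V) (hVt : ∀ᵐ ω ∂P, 0 < V t ω) :
    ∀ᵐ ω ∂P,
      Filter.liminf
        (fun T : ℕ => (((T : ℝ)⁻¹ : ℝ) : EReal)
          * (-(ρ t (fun ω' => max (elog (V T ω' / V t ω')) 0) ω)))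
        Filter.atTop
      = Filter.liminf
        (fun T : ℕ => (((T : ℝ)⁻¹ : ℝ) : EReal)
          * (-(ρ t (fun ω' => max (elog (V T ω')) 0) ω)))
        Filter.atTop :=
  risk_seeking_enough_general (m := m) P ℱ ρ hmono hcash t V hV hVt
end

section
/- Let $\gamma>0$ and let $V$ be an adapted process with $V_t>0$ and $\ln V_t$ integrable for each $t$. Then the process $\varphi^\gamma_t(V)=\liminf_{T\to\infty}E[V_T^\gamma\mid\mathcal{F}_t]^{1/(\gamma T)}$ (in log form, $\liminf_{T\to\infty}\frac{1}{\gamma T}\ln E[V_T^\gamma\mid\mathcal{F}_t]$) is supermartingale time consistent: for $s>t\ge0$ and any $\mathcal{F}_s$-measurable extended-real $m_s$, if $\varphi^\gamma_s(V)\ge m_s$ a.s. then $\varphi^\gamma_t(V)\ge E[m_s\mid\mathcal{F}_t]$ a.s. -/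
open MeasureTheory ProbabilityTheory Filter Set
open scoped ENNReal

/-- The positive part of an extended real, as an extended nonnegative real. -/
noncomputable def epos (x : EReal) : ℝ≥0∞ := if x = ⊤ then ⊤ else ENNReal.ofReal x.toReal

/-- Conditional expectation of an extended-real-valued random variable,
`E[X|ℱₜ] = E[X⁺|ℱₜ] - E[X⁻|ℱₜ]` with the convention `∞ - ∞ = -∞`. -/
noncomputable def erealCondExp {Ω : Type*} [mΩ : MeasurableSpace Ω] [StandardBorelSpace Ω]
    (P : Measure Ω) [IsFiniteMeasure P] (mt : MeasurableSpace Ω) (W : Ω → EReal) : Ω → EReal :=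
  fun ω => ((∫⁻ x, epos (W x) ∂(@condExpKernel Ω mΩ _ P _ mt ω) : ℝ≥0∞) : EReal)
    - ((∫⁻ x, epos (-(W x)) ∂(@condExpKernel Ω mΩ _ P _ mt ω) : ℝ≥0∞) : EReal)

/-- The dynamic monetary entropic utility on `[-∞,∞)`-valued random variables:
`μ^γ_t(W) = (1/γ) ln E[e^{γW}|ℱₜ]` for `γ ≠ 0`, and `μ^0_t(W) = E[W|ℱₜ]`. -/
noncomputable def entropicE {Ω : Type*} [mΩ : MeasurableSpace Ω] [StandardBorelSpace Ω]
    (P : Measure Ω) [IsFiniteMeasure P] (mt : MeasurableSpace Ω) (γ : ℝ) (W : Ω → EReal) :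
    Ω → EReal :=
  if γ = 0 then @erealCondExp Ω mΩ _ P _ mt W
  else fun ω => ((γ⁻¹ : ℝ) : EReal) *
    ENNReal.log (∫⁻ x, EReal.exp ((γ : EReal) * W x) ∂(@condExpKernel Ω mΩ _ P _ mt ω))

/-- The dynamic risk sensitive criterion
`φ^γ_t(V) = liminf_T (1/(γT)) ln E[V_T^γ | ℱₜ]` for `γ ≠ 0` and
`φ^0_t(V) = liminf_T (1/T) E[ln V_T | ℱₜ]` (with `0^γ = ∞` for `γ < 0` and `ln 0 = -∞`). -/
noncomputable def drsc {Ω : Type*} [mΩ : MeasurableSpace Ω] [StandardBorelSpace Ω]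
    (P : Measure Ω) [IsFiniteMeasure P] (ℱ : MeasureTheory.Filtration ℕ mΩ) (γ : ℝ)
    (t : ℕ) (V : ℕ → Ω → ℝ) : Ω → EReal :=
  if γ = 0 then fun ω =>
    Filter.liminf (fun T : ℕ =>
      (((T : ℝ)⁻¹ : ℝ) : EReal) * erealCondExp P (ℱ t) (fun x => elog (V T x)) ω) Filter.atTop
  else fun ω =>
    Filter.liminf (fun T : ℕ =>
      ((((γ * T)⁻¹ : ℝ)) : EReal) *
        ENNReal.log (∫⁻ x, (ENNReal.ofReal (V T x)) ^ γ ∂(@condExpKernel Ω mΩ _ P _ (ℱ t) ω)))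
      Filter.atTop


/-- Membership in `𝕍̃`: strictly positive adapted processes with integrable logarithm. -/
def MemVtilde {Ω : Type*} [m : MeasurableSpace Ω] (ℱ : MeasureTheory.Filtration ℕ m)
    (P : Measure Ω) (V : ℕ → Ω → ℝ) : Prop :=
  (∀ t, Measurable[ℱ t] (V t)) ∧ (∀ t ω, 0 < V t ω) ∧
    (∀ t, MeasureTheory.Integrable (fun ω => Real.log (V t ω)) P)


/-! Conditional Jensen for `exp` bounds `E[mₛ|ℱₜ]` by `log E[exp mₛ|ℱₜ]`. Since `mₛ ≤ φ^γ_s(V)`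
and `exp` commutes with `liminf`, conditional Fatou bounds this in turn by
`liminf_T log E[E[V_T^γ|ℱₛ]^{1/(γT)}|ℱₜ]`. Once `γT ≥ 1` the concave power `1/(γT)` comes out of
the outer expectation, and the tower property turns `E[E[V_T^γ|ℱₛ]|ℱₜ]` into `E[V_T^γ|ℱₜ]`, which
gives `φ^γ_t(V)`. All conditional expectations are integrals against `condExpKernel`, so every
estimate is made for a fixed `ω`, against the probability measure `condExpKernel P (ℱ t) ω`. -/

namespace ProbabilityTheory

variable {Ω : Type*} {m m₁ m₂ : MeasurableSpace Ω} [mΩ : MeasurableSpace Ω]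
  [StandardBorelSpace Ω] {μ : Measure Ω} [IsFiniteMeasure μ]

lemma ae_ae_condExpKernel_of_ae (hm : m ≤ mΩ) {p : Ω → Prop} (h : ∀ᵐ x ∂μ, p x) :
    ∀ᵐ ω ∂μ, ∀ᵐ x ∂condExpKernel μ m ω, p x := by
  rw [← condExpKernel_comp_trim (μ := μ) hm] at h
  exact ae_of_ae_trim hm (Measure.ae_ae_of_ae_comp h)

lemma setLIntegral_lintegral_condExpKernel (hm : m ≤ mΩ) {f : Ω → ℝ≥0∞} (hf : Measurable f)
    {s : Set Ω} (hs : MeasurableSet[m] s) :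
    ∫⁻ ω in s, ∫⁻ x, f x ∂condExpKernel μ m ω ∂μ = ∫⁻ x in s, f x ∂μ := by
  have hdiag : @Measurable Ω (Ω × Ω) mΩ (m.prod mΩ) Function.diag :=
    (measurable_id'' hm).prodMk measurable_id
  have hf' : Measurable[m.prod mΩ] fun p : Ω × Ω => f p.2 := hf.comp measurable_snd
  have key := @Measure.setLIntegral_compProd Ω Ω m mΩ (μ.trim hm) (condExpKernel μ m) _ _
    _ hf' s hs univ MeasurableSet.univ
  rw [compProd_trim_condExpKernel hm, @setLIntegral_map Ω (Ω × Ω) mΩ (m.prod mΩ) μ _ _ _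
    (hs.prod MeasurableSet.univ) hf' hdiag] at key
  rw [← setLIntegral_trim hm hf.lintegral_kernel hs]
  simpa using key.symm

lemma lintegral_condExpKernel_lintegral_condExpKernel (hm₁₂ : m₁ ≤ m₂) (hm₂ : m₂ ≤ mΩ)
    {f : Ω → ℝ≥0∞} (hf : Measurable f) :
    ∀ᵐ ω ∂μ, ∫⁻ x, ∫⁻ y, f y ∂condExpKernel μ m₂ x ∂condExpKernel μ m₁ ω
      = ∫⁻ x, f x ∂condExpKernel μ m₁ ω := by
  have hm₁ := hm₁₂.trans hm₂
  have hg : Measurable fun x => ∫⁻ y, f y ∂condExpKernel μ m₂ x :=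
    hf.lintegral_kernel.mono hm₂ le_rfl
  refine ae_of_ae_trim hm₁ (ae_eq_of_forall_setLIntegral_eq_of_sigmaFinite
    hg.lintegral_kernel hf.lintegral_kernel fun s hs _ => ?_)
  rw [setLIntegral_trim hm₁ hg.lintegral_kernel hs, setLIntegral_trim hm₁ hf.lintegral_kernel hs,
    setLIntegral_lintegral_condExpKernel hm₁ hg hs, setLIntegral_lintegral_condExpKernel hm₁ hf hs,
    setLIntegral_lintegral_condExpKernel hm₂ hf (hm₁₂ s hs)]

end ProbabilityTheory

section

variable {α : Type*} [MeasurableSpace α] {μ : Measure α}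

lemma integrable_of_lintegral_ofReal_ne_top {f : α → ℝ} (hf : AEStronglyMeasurable f μ)
    (hpos : ∫⁻ x, ENNReal.ofReal (f x) ∂μ ≠ ∞) (hneg : ∫⁻ x, ENNReal.ofReal (-f x) ∂μ ≠ ∞) :
    Integrable f μ := by
  have posPart {g : α → ℝ} (hg : AEStronglyMeasurable g μ)
      (h : ∫⁻ x, ENNReal.ofReal (g x) ∂μ ≠ ∞) : Integrable (fun x => max (g x) 0) μ := by
    rw [← lintegral_ofReal_ne_top_iff_integrable (f := fun x => max (g x) 0) (by fun_prop)
      (ae_of_all _ fun x => le_max_right _ _)]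
    simpa using h
  convert (posPart hf hpos).sub (posPart hf.neg hneg) using 1
  ext x
  exact (max_zero_sub_max_neg_zero_eq_self (f x)).symm

lemma integral_le_log_lintegral_exp [IsProbabilityMeasure μ] {f : α → ℝ} (hf : Integrable f μ) :
    ((∫ x, f x ∂μ : ℝ) : EReal) ≤ ENNReal.log (∫⁻ x, ENNReal.ofReal (Real.exp (f x)) ∂μ) := by
  by_cases hexp : Integrable (fun x => Real.exp (f x)) μ
  · rw [← ofReal_integral_eq_lintegral_ofReal hexp (ae_of_all _ fun x => (Real.exp_pos _).le),
      ← Real.log_exp (∫ x, f x ∂μ), ← ENNReal.log_ofReal_of_pos (Real.exp_pos _)]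
    exact ENNReal.log_monotone (ENNReal.ofReal_le_ofReal
      (convexOn_exp.map_integral_le Real.continuous_exp.continuousOn isClosed_univ
        (ae_of_all _ fun _ => mem_univ _) hf hexp))
  · rw [← lintegral_ofReal_ne_top_iff_integrable (by fun_prop)
      (ae_of_all _ fun x => (Real.exp_pos _).le), not_not] at hexp
    simp [hexp]

lemma epos_le_exp (x : EReal) : epos x ≤ EReal.exp x := by
  induction x with
  | bot => simp [epos]
  | coe x =>
    simpa [epos] using ENNReal.ofReal_le_ofReal
      ((le_add_of_nonneg_right zero_le_one).trans (Real.add_one_le_exp x))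
  | top => simp [epos]

lemma ae_ne_top_of_lintegral_epos_ne_top {W : α → EReal} (hW : Measurable W)
    (h : ∫⁻ x, epos (W x) ∂μ ≠ ∞) : ∀ᵐ x ∂μ, W x ≠ ⊤ :=
  (ae_lt_top (measurable_ereal_toENNReal.comp hW) h).mono fun _ hx =>
    EReal.toENNReal_ne_top_iff.1 hx.ne

lemma lintegral_epos_sub_lintegral_epos_neg_le_log_lintegral_exp [IsProbabilityMeasure μ]
    {W : α → EReal} (hW : Measurable W) :
    ((∫⁻ x, epos (W x) ∂μ : ℝ≥0∞) : EReal) - ((∫⁻ x, epos (-W x) ∂μ : ℝ≥0∞) : EReal)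
      ≤ ENNReal.log (∫⁻ x, EReal.exp (W x) ∂μ) := by
  rcases eq_or_ne (∫⁻ x, epos (-W x) ∂μ) ∞ with hneg | hneg
  · simp [hneg]
  rcases eq_or_ne (∫⁻ x, epos (W x) ∂μ) ∞ with hpos | hpos
  · have : ∫⁻ x, EReal.exp (W x) ∂μ = ∞ :=
      top_le_iff.1 (hpos ▸ lintegral_mono fun x => epos_le_exp (W x))
    simp [this]
  set f : α → ℝ := fun x => (W x).toReal
  have hWf : ∀ᵐ x ∂μ, W x = f x := by
    filter_upwards [ae_ne_top_of_lintegral_epos_ne_top hW hpos,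
      ae_ne_top_of_lintegral_epos_ne_top hW.neg hneg] with x htop hbot
    exact (EReal.coe_toReal htop (by simpa using hbot)).symm
  have hpos' : ∫⁻ x, epos (W x) ∂μ = ∫⁻ x, ENNReal.ofReal (f x) ∂μ :=
    lintegral_congr_ae (hWf.mono fun x hx => by simp [hx, epos])
  have hneg' : ∫⁻ x, epos (-W x) ∂μ = ∫⁻ x, ENNReal.ofReal (-f x) ∂μ :=
    lintegral_congr_ae (hWf.mono fun x hx => by simp [hx, epos, ← EReal.coe_neg])
  have hexp : ∫⁻ x, EReal.exp (W x) ∂μ = ∫⁻ x, ENNReal.ofReal (Real.exp (f x)) ∂μ :=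
    lintegral_congr_ae (hWf.mono fun x hx => by simp [hx])
  rw [hpos'] at hpos ⊢
  rw [hneg'] at hneg ⊢
  have hf : Integrable f μ := integrable_of_lintegral_ofReal_ne_top
    (measurable_ereal_toReal.comp hW).aestronglyMeasurable hpos hneg
  rw [hexp, ← EReal.coe_ennreal_toReal hpos, ← EReal.coe_ennreal_toReal hneg, ← EReal.coe_sub,
    ← integral_eq_lintegral_pos_part_sub_lintegral_neg_part hf]
  exact integral_le_log_lintegral_exp hf

lemma lintegral_rpow_le_rpow_lintegral [IsProbabilityMeasure μ] {f : α → ℝ≥0∞}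
    (hf : AEMeasurable f μ) {p : ℝ} (hp₀ : 0 ≤ p) (hp₁ : p ≤ 1) :
    ∫⁻ x, f x ^ p ∂μ ≤ (∫⁻ x, f x ∂μ) ^ p := by
  simpa using ENNReal.lintegral_mul_norm_pow_le (g := 1) hf aemeasurable_const hp₀
    (sub_nonneg.2 hp₁) (add_sub_cancel p 1)

lemma log_lintegral_exp_mul_log_le [IsProbabilityMeasure μ] {F : α → ℝ≥0∞}
    (hF : AEMeasurable F μ) {c : ℝ} (hc₀ : 0 ≤ c) (hc₁ : c ≤ 1) :
    ENNReal.log (∫⁻ x, EReal.exp (c * ENNReal.log (F x)) ∂μ)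
      ≤ c * ENNReal.log (∫⁻ x, F x ∂μ) := by
  have hpow (x : α) : EReal.exp (c * ENNReal.log (F x)) = F x ^ c := by
    rw [mul_comm, EReal.exp_mul, ENNReal.exp_log]
  simp_rw [hpow, ← ENNReal.log_rpow]
  exact ENNReal.log_monotone (lintegral_rpow_le_rpow_lintegral hF hc₀ hc₁)

lemma log_lintegral_exp_liminf_le {φ : ℕ → α → EReal} (hφ : ∀ n, Measurable (φ n)) :
    ENNReal.log (∫⁻ x, EReal.exp (liminf (fun n => φ n x) atTop) ∂μ)
      ≤ liminf (fun n => ENNReal.log (∫⁻ x, EReal.exp (φ n x) ∂μ)) atTop :=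
  calc ENNReal.log (∫⁻ x, EReal.exp (liminf (fun n => φ n x) atTop) ∂μ)
      = ENNReal.log (∫⁻ x, liminf (fun n => EReal.exp (φ n x)) atTop ∂μ) := by
        congr 1
        exact lintegral_congr fun x => EReal.expOrderIso.liminf_apply
    _ ≤ ENNReal.log (liminf (fun n => ∫⁻ x, EReal.exp (φ n x) ∂μ) atTop) :=
        ENNReal.log_monotone (lintegral_liminf_le fun n => (hφ n).ereal_exp)
    _ = liminf (fun n => ENNReal.log (∫⁻ x, EReal.exp (φ n x) ∂μ)) atTop :=
        ENNReal.logOrderIso.liminf_apply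


lemma log_lintegral_exp_liminf_mul_log_le [IsProbabilityMeasure μ] {F : ℕ → α → ℝ≥0∞}
    (hF : ∀ n, Measurable (F n)) {c : ℕ → ℝ} (hc₀ : ∀ n, 0 ≤ c n)
    (hc₁ : ∀ᶠ n in atTop, c n ≤ 1) :
    ENNReal.log (∫⁻ x, EReal.exp (liminf (fun n => c n * ENNReal.log (F n x)) atTop) ∂μ)
      ≤ liminf (fun n => c n * ENNReal.log (∫⁻ x, F n x ∂μ)) atTop :=
  (log_lintegral_exp_liminf_le fun n => (hF n).ennreal_log.const_mul _).trans <|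
    liminf_le_liminf <| hc₁.mono fun n hn =>
      log_lintegral_exp_mul_log_le (hF n).aemeasurable (hc₀ n) hn

end

/-- for `γ > 0`, the dynamic risk sensitive criterion `φ^γ` is supermartingale
time consistent on `𝕍̃`: for `s > t ≥ 0` and any `ℱₛ`-measurable extended-real `mₛ`,
if `φ^γ_s(V) ≥ mₛ` a.s. then `φ^γ_t(V) ≥ E[mₛ|ℱₜ]` a.s. -/
theorem drsc_supermartingale_time_consistent {Ω : Type*} [m : MeasurableSpace Ω]
    [StandardBorelSpace Ω] (P : Measure Ω) [IsProbabilityMeasure P]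
    (ℱ : MeasureTheory.Filtration ℕ m) (γ : ℝ) (hγ : 0 < γ)
    (V : ℕ → Ω → ℝ) (hV : MemVtilde ℱ P V)
    (s t : ℕ) (hst : t < s) (ms : Ω → EReal) (hms : Measurable[ℱ s] ms)
    (h : ∀ᵐ ω ∂P, ms ω ≤ drsc P ℱ γ s V ω) :
    ∀ᵐ ω ∂P, erealCondExp P (ℱ t) ms ω ≤ drsc P ℱ γ t V ω := by
  have hγ0 : γ ≠ 0 := hγ.ne'
  have hc : ∀ᶠ T : ℕ in atTop, (γ * T)⁻¹ ≤ 1 :=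
    ((tendsto_natCast_atTop_atTop.const_mul_atTop hγ).eventually_ge_atTop 1).mono
      fun _ => inv_le_one_of_one_le₀
  have hmom (T : ℕ) : Measurable fun x => ENNReal.ofReal (V T x) ^ γ :=
    ((hV.1 T).mono (ℱ.le T) le_rfl).ennreal_ofReal.pow_const γ
  set F : ℕ → Ω → ℝ≥0∞ := fun T x => ∫⁻ y, ENNReal.ofReal (V T y) ^ γ ∂condExpKernel P (ℱ s) x
  have hF (T : ℕ) : Measurable (F T) := (hmom T).lintegral_kernel.mono (ℱ.le s) le_rfl
  have htower := ae_all_iff.2 fun T =>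
    lintegral_condExpKernel_lintegral_condExpKernel (μ := P) (ℱ.mono hst.le) (ℱ.le s) (hmom T)
  filter_upwards [ae_ae_condExpKernel_of_ae (ℱ.le t) h, htower] with ω hω hωT
  simp only [drsc, if_neg hγ0] at hω ⊢
  calc erealCondExp P (ℱ t) ms ω
      ≤ ENNReal.log (∫⁻ x, EReal.exp (ms x) ∂condExpKernel P (ℱ t) ω) :=
        lintegral_epos_sub_lintegral_epos_neg_le_log_lintegral_exp (hms.mono (ℱ.le s) le_rfl)
    _ ≤ ENNReal.log (∫⁻ x, EReal.exp (liminf (fun T : ℕ =>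
          (((γ * T)⁻¹ : ℝ) : EReal) * ENNReal.log (F T x)) atTop) ∂condExpKernel P (ℱ t) ω) :=
        ENNReal.log_monotone (lintegral_mono_ae (hω.mono fun x hx => EReal.exp_monotone hx))
    _ ≤ liminf (fun T : ℕ => (((γ * T)⁻¹ : ℝ) : EReal) *
          ENNReal.log (∫⁻ x, F T x ∂condExpKernel P (ℱ t) ω)) atTop :=
        log_lintegral_exp_liminf_mul_log_le hF (fun T => by positivity) hc
    _ = _ := by simp_rw [F, hωT]
end

section
/- On the filtered probability space $([0,1],\mathcal{B}([0,1]),\{\mathcal{F}_t\},\lambda)$ with $\mathcal{F}_0$ trivial and $\mathcal{F}_1=\mathcal{B}([0,1])$, define for $T\ge1$ the process $\widehat{V}_T(\omega)=Te^T$ for $\omega\in[0,1/T]$ and $\widehat{V}_T(\omega)=1$ for $\omega\in(1/T,1]$. Then $\liminf_{T\to\infty}\frac{1}{T}\ln\widehat{V}_T(\omega)=0$ for every $\omega\in(0,1]$, while $\liminf_{T\to\infty}\frac{1}{T}\ln E[\widehat{V}_T]\ge 1$. Consequently the risk-seeking criterion $\varphi^1$ with $\gamma=1$ is not submartingale time consistent: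 $\varphi^1_1(\widehat{V})\le 0$ a.s. but $\varphi^1_0(\widehat{V})\ge1 > E[0]$. -/
/-!
For fixed `ω > 0` the spike `[0, 1/T]` eventually leaves `ω`, so `V̂_T(ω) = 1` for large `T`
and the pathwise growth rate is `0`. The expectation, however, always collects the mass
`T e^T · (1/T) = e^T` of the spike, so `E[V̂_T]` is squeezed between `e^T` and `2 e^T` and its
growth rate is `1`.
-/

open MeasureTheory Filter Set

/-- The process `V̂_T` on `([0,1], ℬ, λ)`: `V̂_T(ω) = T·e^T` for `ω ∈ [0, 1/T]` and
`V̂_T(ω) = 1` otherwise. -/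
noncomputable def Vhat (T : ℕ) (ω : ℝ) : ℝ :=
  if ω ≤ 1 / (T : ℝ) then (T : ℝ) * Real.exp T else 1

open Topology

lemma integral_Icc_zero_one_ite_le {a : ℝ} (ha₀ : 0 ≤ a) (ha₁ : a ≤ 1) (c d : ℝ) :
    ∫ ω in Icc (0 : ℝ) 1, (if ω ≤ a then c else d) = a * c + (1 - a) * d := by
  have h_split : (fun ω : ℝ => if ω ≤ a then c else d) =
      fun ω => (Iic a).indicator (fun _ => c - d) ω + d := by
    funext ω
    by_cases hω : ω ≤ a <;> simp [hω]
  have h_inter : Iic a ∩ Icc (0 : ℝ) 1 = Icc 0 a := by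
    ext ω
    simp only [mem_inter_iff, mem_Iic, mem_Icc]
    constructor
    · rintro ⟨hωa, hω₀, -⟩
      exact ⟨hω₀, hωa⟩
    · rintro ⟨hω₀, hωa⟩
      exact ⟨hωa, hω₀, hωa.trans ha₁⟩
  rw [h_split, integral_add _ (integrable_const d),
    integral_indicator_const _ measurableSet_Iic, integral_const,
    measureReal_restrict_apply measurableSet_Iic, h_inter, measureReal_restrict_apply_univ,
    Real.volume_real_Icc_of_le ha₀, Real.volume_real_Icc_of_le zero_le_one]
  · simp only [smul_eq_mul]
    ring
  · exact (integrable_const (c - d)).indicator measurableSet_Iic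

lemma integral_Vhat {T : ℕ} (hT : 1 ≤ T) :
    ∫ ω in Icc (0 : ℝ) 1, Vhat T ω = Real.exp T + 1 - 1 / T := by
  have hT' : (1 : ℝ) ≤ T := by exact_mod_cast hT
  unfold Vhat
  rw [integral_Icc_zero_one_ite_le (by positivity) (div_le_one_of_le₀ hT' (by positivity))]
  field_simp
  ring

lemma Vhat_eventually_eq_one {ω : ℝ} (hω : 0 < ω) : ∀ᶠ T : ℕ in atTop, Vhat T ω = 1 := by
  filter_upwards [tendsto_one_div_atTop_nhds_zero_nat.eventually_lt_const hω] with T hT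
  exact if_neg (not_le.2 hT)

lemma liminf_inv_mul_log_Vhat {ω : ℝ} (hω : 0 < ω) :
    liminf (fun T : ℕ => (T : ℝ)⁻¹ * Real.log (Vhat T ω)) atTop = 0 := by
  have h : ∀ᶠ T : ℕ in atTop, (T : ℝ)⁻¹ * Real.log (Vhat T ω) = 0 := by
    filter_upwards [Vhat_eventually_eq_one hω] with T hT
    rw [hT, Real.log_one, mul_zero]
  rw [liminf_congr h, liminf_const]

lemma tendsto_inv_mul_log_of_exp_le_of_le_mul_exp {x : ℕ → ℝ} {C : ℝ}
    (hx : ∀ᶠ T : ℕ in atTop, Real.exp T ≤ x T ∧ x T ≤ C * Real.exp T) :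
    Tendsto (fun T : ℕ => (T : ℝ)⁻¹ * Real.log (x T)) atTop (𝓝 1) := by
  have h_upper_lim : Tendsto (fun T : ℕ => 1 + (T : ℝ)⁻¹ * Real.log C) atTop (𝓝 1) := by
    simpa using ((tendsto_inv_atTop_nhds_zero_nat (𝕜 := ℝ)).mul_const (Real.log C)).const_add 1
  refine tendsto_of_tendsto_of_tendsto_of_le_of_le' tendsto_const_nhds h_upper_lim ?_ ?_
  · filter_upwards [hx, eventually_ge_atTop 1] with T hxT hT
    obtain ⟨hlo, -⟩ := hxT
    have hT' : (0 : ℝ) < T := by exact_mod_cast hT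
    have hlog : (T : ℝ) ≤ Real.log (x T) := by
      simpa using Real.log_le_log (Real.exp_pos _) hlo
    calc (1 : ℝ) = (T : ℝ)⁻¹ * T := (inv_mul_cancel₀ hT'.ne').symm
      _ ≤ (T : ℝ)⁻¹ * Real.log (x T) := by gcongr
  · filter_upwards [hx, eventually_ge_atTop 1] with T hxT hT
    obtain ⟨hlo, hhi⟩ := hxT
    have hT' : (0 : ℝ) < T := by exact_mod_cast hT
    have hx_pos : 0 < x T := (Real.exp_pos _).trans_le hlo
    have hC : 0 < C := pos_of_mul_pos_left (hx_pos.trans_le hhi) (Real.exp_pos _).le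
    have hlog : Real.log (x T) ≤ Real.log C + T := by
      simpa [Real.log_mul hC.ne' (Real.exp_pos _).ne'] using Real.log_le_log hx_pos hhi
    calc (T : ℝ)⁻¹ * Real.log (x T) ≤ (T : ℝ)⁻¹ * (Real.log C + T) := by gcongr
      _ = 1 + (T : ℝ)⁻¹ * Real.log C := by field_simp; ring

lemma liminf_inv_mul_log_integral_Vhat :
    liminf (fun T : ℕ => (T : ℝ)⁻¹ * Real.log (∫ ω in Icc (0 : ℝ) 1, Vhat T ω)) atTop = 1 := by
  refine (tendsto_inv_mul_log_of_exp_le_of_le_mul_exp (C := 2) ?_).liminf_eq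
  filter_upwards [eventually_ge_atTop 1] with T hT
  have h_inv₀ : 0 ≤ 1 / (T : ℝ) := by positivity
  have h_inv₁ : 1 / (T : ℝ) ≤ 1 := div_le_one_of_le₀ (by exact_mod_cast hT) (by positivity)
  have h_exp : 1 ≤ Real.exp T := Real.one_le_exp (by positivity)
  rw [integral_Vhat hT]
  constructor <;> linarith

/-- for the process `V̂`, `liminf_T (1/T) ln V̂_T(ω) = 0` for every
`ω ∈ (0,1]`, while `liminf_T (1/T) ln E[V̂_T] ≥ 1`. Consequently the risk-seeking criterion
`φ¹` (with `γ = 1`) is not submartingale time consistent: `φ¹₁(V̂) ≤ 0` a.s. but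
`φ¹₀(V̂) ≥ 1 > E[0] = 0`. -/
theorem drsc_not_submartingale_example :
    (∀ ω : ℝ, 0 < ω →
      Filter.liminf (fun T : ℕ => (T : ℝ)⁻¹ * Real.log (Vhat T ω)) Filter.atTop = 0) ∧
    (1 ≤ Filter.liminf
      (fun T : ℕ => (T : ℝ)⁻¹ * Real.log (∫ ω in Set.Icc (0 : ℝ) 1, Vhat T ω)) Filter.atTop) ∧
    ((∀ᵐ ω ∂(MeasureTheory.volume.restrict (Set.Icc (0 : ℝ) 1)),
        Filter.liminf (fun T : ℕ => (T : ℝ)⁻¹ * Real.log (Vhat T ω)) Filter.atTop ≤ 0) ∧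
      ¬ (Filter.liminf
          (fun T : ℕ => (T : ℝ)⁻¹ * Real.log (∫ ω in Set.Icc (0 : ℝ) 1, Vhat T ω)) Filter.atTop
            ≤ 0)) := by
  have h_pos : ∀ᵐ ω ∂(volume.restrict (Icc (0 : ℝ) 1)), ω ∈ Ioc 0 1 := by
    rw [← Measure.restrict_congr_set Ioc_ae_eq_Icc]
    exact ae_restrict_mem measurableSet_Ioc
  refine ⟨fun ω hω => liminf_inv_mul_log_Vhat hω, liminf_inv_mul_log_integral_Vhat.ge, ?_, ?_⟩
  · filter_upwards [h_pos] with ω hω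
    exact (liminf_inv_mul_log_Vhat hω.1).le
  · rw [liminf_inv_mul_log_integral_Vhat]
    exact one_pos.not_ge
end
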